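/- Let a and b be integers with 0 < a < b such that a does not divide b, and let k be an integer with 0 ≤ k < F(a,b). Then there exists a positive integer i with b − ia ≥ 1 such that, writing c = min(a, b − ia) and d = max(a, b − ia), either c divides d and k = 0, or else c does not divide d and F(c, d) = k. -/
import Mathlib

def cf (a b : ℕ) : List ℕ :=
  if h : a = 0 then [] else (b / a) :: cf (b % a) a
termination_by a
decreasing_by exact Nat.mod_lt _ (Nat.pos_of_ne_zero h)

def Pl (l : List ℕ) (j : ℕ) : Prop :=
  j + 1 < l.length ∧ (∀ i < j, l.getD i 0 = l.getD 0 0) ∧ l.getD 0 0 ≤ l.getD j 0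

instance (l : List ℕ) : DecidablePred (Pl l) := fun j => by unfold Pl; infer_instance

def Jl (l : List ℕ) : ℕ := Nat.findGreatest (Pl l) (l.length - 2)

def Jfun (a b : ℕ) : ℕ :=
  Nat.findGreatest
    (fun j => j + 1 < (cf a b).length ∧ (∀ i < j, (cf a b).getD i 0 = (cf a b).getD 0 0) ∧
      (cf a b).getD 0 0 ≤ (cf a b).getD j 0)
    ((cf a b).length - 2)

theorem findGreatest_congr {P Q : ℕ → Prop} [DecidablePred P] [DecidablePred Q]
    (h : ∀ n, P n ↔ Q n) : ∀ k, Nat.findGreatest P k = Nat.findGreatest Q k := by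
  intro k
  induction k with
  | zero => rfl
  | succ k ih =>
      rw [Nat.findGreatest_succ, Nat.findGreatest_succ, ih]
      by_cases hp : P (k+1)
      · rw [if_pos hp, if_pos ((h _).mp hp)]
      · rw [if_neg hp, if_neg (fun hq => hp ((h _).mpr hq))]

theorem Jfun_eq (a b : ℕ) : Jfun a b = Jl (cf a b) :=
  findGreatest_congr (fun _ => Iff.rfl) _

lemma cf_pos {a : ℕ} (ha : 0 < a) (b : ℕ) : cf a b = (b / a) :: cf (b % a) a := by
  rw [cf, dif_neg (Nat.pos_iff_ne_zero.mp ha)]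

lemma getD_cons_zero' (m : ℕ) (t : List ℕ) : (m :: t).getD 0 0 = m := rfl
lemma getD_cons_succ' (m : ℕ) (t : List ℕ) (i : ℕ) : (m :: t).getD (i+1) 0 = t.getD i 0 := rfl

-- If Pl (m :: t) j holds with j ≥ 1, then m ≤ t.getD 0 0.
lemma Pl_cons_head_le {m : ℕ} {t : List ℕ} {j : ℕ} (hj : 1 ≤ j) (h : Pl (m :: t) j) :
    m ≤ t.getD 0 0 := by
  obtain ⟨h1, h2, h3⟩ := h
  rcases Nat.lt_or_ge j 2 with hj2 | hj2
  · interval_cases j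
    exact h3
  · have := h2 1 (by omega)
    simp only [getD_cons_succ', getD_cons_zero'] at this
    omega

-- Jl of a list of length ≤ 2 is 0.
lemma Jl_short {l : List ℕ} (h : l.length ≤ 2) : Jl l = 0 := by
  unfold Jl
  have : l.length - 2 = 0 := by omega
  rw [this, Nat.findGreatest_zero]

-- A1 : head bigger than second entry
lemma Jl_cons_gt {m : ℕ} {t : List ℕ} (h : t.getD 0 0 < m) : Jl (m :: t) = 0 := by
  unfold Jl
  rw [Nat.findGreatest_eq_zero_iff]
  intro j hj _ hP
  exact absurd (Pl_cons_head_le hj hP) (by omega)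

-- A2 : head smaller than second entry, length ≥ 3
lemma Jl_cons_lt {m : ℕ} {t : List ℕ} (hlen : 2 ≤ t.length) (h : m < t.getD 0 0) :
    Jl (m :: t) = 1 := by
  unfold Jl
  rw [Nat.findGreatest_eq_iff]
  refine ⟨by simp; omega, fun _ => ⟨by simp; omega, fun i hi => by interval_cases i; rfl,
    by simpa [getD_cons_succ'] using h.le⟩, fun n hn hn' hP => ?_⟩
  obtain ⟨h1, h2, h3⟩ := hP
  have := h2 1 (by omega)
  simp only [getD_cons_succ', getD_cons_zero'] at this
  omega

-- shift lemma
lemma Pl_cons_shift {m : ℕ} {t : List ℕ} (ht : t.getD 0 0 = m) (j : ℕ) :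
    Pl (m :: t) (j + 1) ↔ Pl t j := by
  constructor
  · rintro ⟨h1, h2, h3⟩
    refine ⟨by simpa using h1, fun i hi => ?_, ?_⟩
    · have := h2 (i+1) (by omega)
      simp only [getD_cons_succ', getD_cons_zero'] at this
      rw [this, ht]
    · simp only [getD_cons_succ', getD_cons_zero'] at h3
      rw [ht]; exact h3
  · rintro ⟨h1, h2, h3⟩
    refine ⟨by simp; omega, fun i hi => ?_, ?_⟩
    · rcases Nat.eq_zero_or_pos i with rfl | hi0
      · rfl
      · obtain ⟨i', rfl⟩ := Nat.exists_eq_add_of_le hi0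
        simp only [getD_cons_succ', getD_cons_zero']
        rw [show 1 + i' = i' + 1 from by omega] at hi ⊢
        simp only [getD_cons_succ']
        rw [h2 i' (by omega), ht]
    · simp only [getD_cons_succ', getD_cons_zero']
      rw [← ht]; exact h3

-- A3 : prepend the head value
lemma Jl_cons_eq {m : ℕ} {t : List ℕ} (hlen : 2 ≤ t.length) (ht : t.getD 0 0 = m) :
    Jl (m :: t) = Jl t + 1 := by
  have hPt0 : Pl t 0 := ⟨by omega, fun i hi => by omega, le_refl _⟩
  have hbound : (m :: t).length - 2 = (t.length - 2) + 1 := by simp; omega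
  unfold Jl
  rw [hbound]
  apply le_antisymm
  · have hQ1 : Pl (m :: t) 1 := (Pl_cons_shift ht 0).mpr hPt0
    have hge1 : 1 ≤ Nat.findGreatest (Pl (m :: t)) (t.length - 2 + 1) :=
      Nat.le_findGreatest (by omega) hQ1
    have hspec : Pl (m :: t) (Nat.findGreatest (Pl (m :: t)) (t.length - 2 + 1)) :=
      Nat.findGreatest_spec (m := 1) (by omega) hQ1
    obtain ⟨J', hJ'⟩ : ∃ J', Nat.findGreatest (Pl (m :: t)) (t.length - 2 + 1) = J' + 1 :=
      ⟨Nat.findGreatest (Pl (m :: t)) (t.length - 2 + 1) - 1, by omega⟩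
    rw [hJ'] at hspec
    have hPt : Pl t J' := (Pl_cons_shift ht J').mp hspec
    have hle : J' ≤ t.length - 2 := by
      have := Nat.findGreatest_le (P := Pl (m :: t)) (t.length - 2 + 1)
      omega
    have := Nat.le_findGreatest hle hPt
    omega
  · have hspec : Pl t (Nat.findGreatest (Pl t) (t.length - 2)) :=
      Nat.findGreatest_spec (m := 0) (Nat.zero_le _) hPt0
    have hle : Nat.findGreatest (Pl t) (t.length - 2) ≤ t.length - 2 :=
      Nat.findGreatest_le _
    exact Nat.le_findGreatest (by omega) ((Pl_cons_shift ht _).mpr hspec)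

def F (a b : ℕ) : ℕ := if Even (Jfun a b) then b / a else b / a - 1

lemma cf_nil_iff {a b : ℕ} : cf a b = [] ↔ a = 0 := by
  constructor
  · intro h
    by_contra ha
    rw [cf, dif_neg ha] at h
    exact List.cons_ne_nil _ _ h
  · intro h; rw [h, cf, dif_pos rfl]

lemma interior_move {a b r q m k : ℕ} (ha : 0 < a) (hr : 0 < r) (hra : r < a)
    (hb : a * q + r = b) (hm : 1 ≤ m) (hmq : m + 1 ≤ q)
    (hFk : (if Even (Jl (m :: cf r a)) then m else m - 1) = k) :
    ∃ i : ℕ, 0 < i ∧ 1 ≤ b - i * a ∧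
      ((min a (b - i * a) ∣ max a (b - i * a) ∧ k = 0) ∨
        (¬ min a (b - i * a) ∣ max a (b - i * a) ∧
          F (min a (b - i * a)) (max a (b - i * a)) = k)) := by
  have hsub : (q - m) * a = q * a - m * a := Nat.sub_mul q m a
  have hle : m * a ≤ q * a := Nat.mul_le_mul_right a (by omega)
  have heq : b - (q - m) * a = m * a + r := by
    rw [← hb, hsub]
    have h1 : a * q = q * a := Nat.mul_comm a q
    omega
  have hlt : a < m * a + r := by
    have : 1 * a ≤ m * a := Nat.mul_le_mul_right a hm
    omega
  have hmin : min a (b - (q - m) * a) = a := by rw [heq]; omega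
  have hmax : max a (b - (q - m) * a) = m * a + r := by rw [heq]; omega
  have hdiv : (m * a + r) / a = m := by
    rw [Nat.mul_comm m a, Nat.mul_add_div ha, Nat.div_eq_of_lt hra, Nat.add_zero]
  have hmod : (m * a + r) % a = r := by
    rw [Nat.mul_comm m a, Nat.mul_add_mod, Nat.mod_eq_of_lt hra]
  have hnd : ¬ a ∣ (m * a + r) := by
    intro hd
    have : (m * a + r) % a = 0 := Nat.dvd_iff_mod_eq_zero.mp hd
    omega
  refine ⟨q - m, by omega, by rw [heq]; omega, Or.inr ⟨?_, ?_⟩⟩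
  · rw [hmin, hmax]; exact hnd
  · rw [hmin, hmax, F, Jfun_eq, cf_pos ha, hdiv, hmod]
    exact hFk

lemma full_move {a b r q k : ℕ} (ha : 0 < a) (hr : 0 < r) (hra : r < a)
    (hb : a * q + r = b) (hq : 1 ≤ q)
    (h : (r ∣ a ∧ k = 0) ∨ (¬ r ∣ a ∧ (if Even (Jl (cf r a)) then a / r else a / r - 1) = k)) :
    ∃ i : ℕ, 0 < i ∧ 1 ≤ b - i * a ∧
      ((min a (b - i * a) ∣ max a (b - i * a) ∧ k = 0) ∨
        (¬ min a (b - i * a) ∣ max a (b - i * a) ∧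
          F (min a (b - i * a)) (max a (b - i * a)) = k)) := by
  have heq : b - q * a = r := by
    rw [← hb]
    have h1 : a * q = q * a := Nat.mul_comm a q
    omega
  have hmin : min a (b - q * a) = r := by rw [heq]; omega
  have hmax : max a (b - q * a) = a := by rw [heq]; omega
  refine ⟨q, by omega, by omega, ?_⟩
  rw [hmin, hmax]
  rcases h with ⟨hd, hk⟩ | ⟨hnd, hFk⟩
  · exact Or.inl ⟨hd, hk⟩
  · refine Or.inr ⟨hnd, ?_⟩
    rw [F, Jfun_eq]
    exact hFk

/-- For `0 < a < b` with `a ∤ b` and any `0 ≤ k < F(a,b)`, there is a positive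
integer `i` with `b − i·a ≥ 1` such that, writing `c = min(a, b − i·a)` and
`d = max(a, b − i·a)`, either `c ∣ d` and `k = 0`, or `c ∤ d` and `F(c,d) = k`. -/
theorem exists_move_F_eq (a b k : ℕ) (ha : 0 < a) (hab : a < b) (hnd : ¬ a ∣ b)
    (hk : k < F a b) :
    ∃ i : ℕ, 0 < i ∧ 1 ≤ b - i * a ∧
      ((min a (b - i * a) ∣ max a (b - i * a) ∧ k = 0) ∨
        (¬ min a (b - i * a) ∣ max a (b - i * a) ∧
          F (min a (b - i * a)) (max a (b - i * a)) = k)) := by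
  have hr : 0 < b % a := Nat.pos_of_ne_zero (fun h => hnd (Nat.dvd_of_mod_eq_zero h))
  have hra : b % a < a := Nat.mod_lt _ ha
  have hb : a * (b / a) + b % a = b := Nat.div_add_mod b a
  set q := b / a with hqdef
  set r := b % a with hrdef
  have hq1 : 1 ≤ q := (Nat.one_le_div_iff ha).mpr hab.le
  have hcf : cf a b = q :: cf r a := cf_pos ha b
  have htcons : cf r a = (a / r) :: cf (a % r) r := cf_pos hr a
  set a1 := a / r with ha1def
  have ha1pos : 1 ≤ a1 := (Nat.one_le_div_iff hr).mpr hra.le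
  have ht0 : (cf r a).getD 0 0 = a1 := by rw [htcons]; rfl
  have hFab : F a b = if Even (Jl (q :: cf r a)) then q else q - 1 := by
    rw [F, Jfun_eq, hcf]
  -- length of cf r a
  rcases Nat.lt_or_ge (cf r a).length 2 with hlen | hlen
  · -- length = 1, i.e. r ∣ a
    have hlen1 : (cf r a).length = 1 := by
      rw [htcons] at hlen ⊢
      simp only [List.length_cons] at hlen ⊢
      omega
    have hmod0 : a % r = 0 := by
      by_contra hmr
      rw [htcons, cf_pos (Nat.pos_of_ne_zero hmr)] at hlen1
      simp at hlen1
    have hdvd : r ∣ a := Nat.dvd_of_mod_eq_zero hmod0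
    have hJ0 : Jl (q :: cf r a) = 0 := Jl_short (by simp [hlen1])
    have hFq : F a b = q := by rw [hFab, hJ0, if_pos (Even.zero)]
    have hkq : k < q := by rw [hFq] at hk; exact hk
    rcases Nat.eq_zero_or_pos k with rfl | hkpos
    · exact full_move ha hr hra hb hq1 (Or.inl ⟨hdvd, rfl⟩)
    · refine interior_move (m := k) ha hr hra hb hkpos (by omega) ?_
      rw [Jl_short (by simp [hlen1]), if_pos Even.zero]
  · -- length ≥ 2 : in particular a % r ≠ 0, r ∤ a
    have hmodne : a % r ≠ 0 := by
      intro hmr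
      rw [htcons, hmr, cf, dif_pos rfl] at hlen
      simp at hlen
    have hndra : ¬ r ∣ a := fun hd => hmodne (Nat.dvd_iff_mod_eq_zero.mp hd)
    rcases Nat.eq_zero_or_pos (Jl (q :: cf r a)) with hJ0 | hJpos
    · -- J = 0 : a1 < q, F = q
      have hFq : F a b = q := by rw [hFab, hJ0, if_pos Even.zero]
      have hkq : k < q := by rw [hFq] at hk; exact hk
      have hnP1 : ¬ Pl (q :: cf r a) 1 := by
        have := Nat.findGreatest_eq_zero_iff.mp hJ0 (n := 1) (by omega)
        apply this
        simp only [List.length_cons]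
        omega
      have ha1q : a1 < q := by
        by_contra hq_le
        apply hnP1
        refine ⟨by simp; omega, fun i hi => by interval_cases i; rfl, ?_⟩
        rw [getD_cons_succ', getD_cons_zero', ht0]
        omega
      rcases Nat.lt_or_ge a1 k with hka | hka
      · -- a1 < k : move m = k
        refine interior_move (m := k) ha hr hra hb (by omega) (by omega) ?_
        rw [Jl_cons_gt (by rw [ht0]; omega), if_pos Even.zero]
      rcases Nat.lt_or_ge (k+1) a1 with hka2 | hka2
      · -- k + 1 < a1 : move m = k + 1
        refine interior_move (m := k + 1) ha hr hra hb (by omega) (by omega) ?_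
        rw [Jl_cons_lt hlen (by omega), if_neg (by simp [Nat.even_add_one])]
        omega
      · -- a1 - 1 ≤ k ≤ a1
        have hJcons : Jl (a1 :: cf r a) = Jl (cf r a) + 1 := Jl_cons_eq hlen ht0
        rcases Nat.even_or_odd (Jl (cf r a)) with hev | hod
        · rcases Nat.lt_or_ge k a1 with hlt | hge
          · -- k = a1 - 1 : move m = a1, Jl = Jt + 1 odd, F = a1 - 1
            refine interior_move (m := a1) ha hr hra hb (by omega) (by omega) ?_
            rw [hJcons, if_neg (by simpa [Nat.even_add_one] using hev)]
            omega
          · -- k = a1 : full move, Jl t even, F = a1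
            refine full_move ha hr hra hb hq1 (Or.inr ⟨hndra, ?_⟩)
            rw [if_pos hev]
            omega
        · rcases Nat.lt_or_ge k a1 with hlt | hge
          · -- k = a1 - 1 : full move, Jl t odd → F = a1 - 1
            refine full_move ha hr hra hb hq1 (Or.inr ⟨hndra, ?_⟩)
            rw [if_neg (Nat.not_even_iff_odd.mpr hod)]
            omega
          · -- k = a1 : move m = a1, Jl = Jt + 1 even
            refine interior_move (m := a1) ha hr hra hb (by omega) (by omega) ?_
            rw [hJcons, if_pos (by simpa [Nat.even_add_one] using Nat.not_even_iff_odd.mpr hod)]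
            omega
    · -- J ≥ 1 : q ≤ a1
      have hspec : Pl (q :: cf r a) (Jl (q :: cf r a)) := by
        have h := (Nat.findGreatest_eq_iff (P := Pl (q :: cf r a))
          (k := (q :: cf r a).length - 2) (m := Jl (q :: cf r a))).mp rfl
        exact h.2.1 (by omega)
      have hqa1 : q ≤ a1 := by
        have := Pl_cons_head_le hJpos hspec
        rwa [ht0] at this
      rcases Nat.lt_or_ge (k + 1) q with hkq | hkq
      · -- k + 2 ≤ q : move m = k + 1
        refine interior_move (m := k + 1) ha hr hra hb (by omega) (by omega) ?_
        rw [Jl_cons_lt hlen (by omega), if_neg (by simp [Nat.even_add_one])]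
        omega
      · -- k = q - 1, needs Even J (else F = q - 1 contradicts hk)
        have hkF : k < if Even (Jl (q :: cf r a)) then q else q - 1 := by
          rw [← hFab]; exact hk
        have hev : Even (Jl (q :: cf r a)) := by
          by_contra hodd
          rw [if_neg hodd] at hkF
          omega
        have hk' : k = q - 1 := by
          rw [if_pos hev] at hkF
          omega
        have hJ2 : 2 ≤ Jl (q :: cf r a) := by
          rcases hev with ⟨j, hj⟩
          omega
        have ha1q : a1 = q := by
          have := hspec.2.1 1 (by omega)
          rw [getD_cons_succ', getD_cons_zero', ht0] at this
          exact this
        have hJcons : Jl (q :: cf r a) = Jl (cf r a) + 1 :=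
          Jl_cons_eq hlen (by rw [ht0, ha1q])
        refine full_move ha hr hra hb hq1 (Or.inr ⟨hndra, ?_⟩)
        have hodd : ¬ Even (Jl (cf r a)) := by
          intro h
          rw [hJcons] at hev
          exact (Nat.even_add_one.mp hev) h
        rw [if_neg hodd]
        omega
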